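/- (Extension theorem) Let V be a domain of utility functions over lotteries on A = {a,b,c} such that (1) V contains all expected-utility functionals induced by no-ties Bernoulli utilities, (2) every v ∈ V has no ties on degenerate lotteries, and (3) every v ∈ V strictly respects first-order stochastic dominance with respect to its induced strict order on A. Then with |N| = 3, every normalized-cone-continuous, efficient, strategy-proof, and non-bossy rule φ : V^N → Π is ordinal: φ(u) = φ(u') whenever u and u' induce the same profile of strict orders. -/
import Mathlib


open Finset Filter Topology

/-- No ties on degenerate lotteries. -/
def NoTies (u : Fin 3 → ℝ) : Prop := ∀ x y : Fin 3, x ≠ y → u x ≠ u y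

/-- A lottery over three objects. -/
def IsLottery (π : Fin 3 → ℝ) : Prop := (∀ x, 0 ≤ π x) ∧ ∑ x, π x = 1

/-- A 3×3 bistochastic matrix (rows = agents, columns = objects). -/
def Bistochastic (π : Fin 3 → Fin 3 → ℝ) : Prop :=
  (∀ i x, 0 ≤ π i x) ∧ (∀ i, ∑ x, π i x = 1) ∧ (∀ x, ∑ i, π i x = 1)

/-- Expected utility of lottery `π` under Bernoulli utility `u`. -/
def EU (u π : Fin 3 → ℝ) : ℝ := ∑ x, u x * π x

/-- `u` and `v` induce the same strict order on objects. -/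
def SameOrder (u v : Fin 3 → ℝ) : Prop := ∀ x y : Fin 3, u x > u y ↔ v x > v y

def NoTiesProfile (u : Fin 3 → Fin 3 → ℝ) : Prop := ∀ i, NoTies (u i)

/-- Utilities normalized to sum to one. -/
def Normalized (u : Fin 3 → ℝ) : Prop := ∑ x, u x = 1

/-- Rate of middle substitution, for `u a > u b > u c`. -/
noncomputable def mu (u : Fin 3 → ℝ) (a b c : Fin 3) : ℝ := (u b - u c) / (u a - u c)

/-- Effectively the same: same strict order and same rate of middle substitution. -/
def EffSame (u v : Fin 3 → ℝ) : Prop :=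
  SameOrder u v ∧ ∀ a b c : Fin 3, u a > u b → u b > u c → mu u a b c = mu v a b c

/-- The rule maps (no-ties) profiles to bistochastic matrices. -/
def BistochasticValued (φ : (Fin 3 → Fin 3 → ℝ) → Fin 3 → Fin 3 → ℝ) : Prop :=
  ∀ u, NoTiesProfile u → Bistochastic (φ u)

def StrategyProof (φ : (Fin 3 → Fin 3 → ℝ) → Fin 3 → Fin 3 → ℝ) : Prop :=
  ∀ u i ui', NoTiesProfile u → NoTies ui' →
    EU (u i) (φ u i) ≥ EU (u i) (φ (Function.update u i ui') i)

def NonBossy (φ : (Fin 3 → Fin 3 → ℝ) → Fin 3 → Fin 3 → ℝ) : Prop :=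
  ∀ u i ui', NoTiesProfile u → NoTies ui' →
    φ u i = φ (Function.update u i ui') i → φ u = φ (Function.update u i ui')

/-- `π'` Pareto-dominates `π` at `u` in expected utility. -/
def Dominates (u π' π : Fin 3 → Fin 3 → ℝ) : Prop :=
  (∀ j, EU (u j) (π' j) ≥ EU (u j) (π j)) ∧ ∃ i, EU (u i) (π' i) > EU (u i) (π i)

def Efficient (φ : (Fin 3 → Fin 3 → ℝ) → Fin 3 → Fin 3 → ℝ) : Prop :=
  ∀ u, NoTiesProfile u → ¬ ∃ π', Bistochastic π' ∧ Dominates u π' (φ u)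

/-- Normalized-cone-continuity. -/
def NCContinuous (φ : (Fin 3 → Fin 3 → ℝ) → Fin 3 → Fin 3 → ℝ) : Prop :=
  ∀ (u : Fin 3 → Fin 3 → ℝ) (i : Fin 3) (us : ℕ → Fin 3 → ℝ),
    NoTiesProfile u → Normalized (u i) →
    (∀ k, NoTies (us k) ∧ Normalized (us k)) →
    Tendsto us atTop (nhds (u i)) →
    Tendsto (fun k => φ (Function.update u i (us k))) atTop (nhds (φ u))

/-- Utility functionals over lotteries. -/
abbrev VUtil := (Fin 3 → ℝ) → ℝ

/-- The degenerate lottery on `x`. -/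
def degen (x : Fin 3) : Fin 3 → ℝ := fun y => if y = x then 1 else 0

/-- No ties on degenerate lotteries. -/
def VNoTies (v : VUtil) : Prop := ∀ x y : Fin 3, x ≠ y → v (degen x) ≠ v (degen y)

/-- Same induced strict order on objects (via degenerate lotteries). -/
def VSameOrder (v w : VUtil) : Prop :=
  ∀ x y : Fin 3, v (degen x) > v (degen y) ↔ w (degen x) > w (degen y)

/-- `π` stochastically dominates `π'` at the strict order induced by `v`. -/
def VSDom (v : VUtil) (π π' : Fin 3 → ℝ) : Prop :=
  π ≠ π' ∧ ∀ x : Fin 3,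
    ∑ y ∈ Finset.univ.filter (fun y => v (degen y) ≥ v (degen x)), π' y ≤
    ∑ y ∈ Finset.univ.filter (fun y => v (degen y) ≥ v (degen x)), π y

/-- Auxiliary: the expected-utility functional induced by a Bernoulli utility. -/
def EWf (w : Fin 3 → ℝ) : VUtil := fun π => EU w π

lemma EU_degen (w : Fin 3 → ℝ) (x : Fin 3) : EU w (degen x) = w x := by
  simp [EU, degen]

lemma EWf_degen (w : Fin 3 → ℝ) (x : Fin 3) : EWf w (degen x) = w x := EU_degen w x

lemma eps_nonneg {s c : ℝ} (h : ∀ ε : ℝ, 0 < ε → 0 ≤ s + ε * c) : 0 ≤ s := by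
  by_contra hs
  push_neg at hs
  rcases le_or_gt c 0 with hc | hc
  · have h1 := h 1 one_pos
    nlinarith
  · have h2 := h (-s / (2 * c)) (div_pos (by linarith) (by linarith))
    have he : -s / (2 * c) * c = -s / 2 := by
      field_simp
    rw [he] at h2
    linarith

theorem stmt13 (V : Set VUtil)
    (hV1 : ∀ w : Fin 3 → ℝ, NoTies w → (fun π => EU w π) ∈ V)
    (hV2 : ∀ v ∈ V, VNoTies v)
    (hV3 : ∀ v ∈ V, ∀ π π' : Fin 3 → ℝ, IsLottery π → IsLottery π' →
      VSDom v π π' → v π > v π')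
    (φ : (Fin 3 → VUtil) → Fin 3 → Fin 3 → ℝ)
    -- the rule maps profiles in the domain to bistochastic matrices
    (hB : ∀ u : Fin 3 → VUtil, (∀ k, u k ∈ V) → Bistochastic (φ u))
    -- efficiency
    (hE : ∀ u : Fin 3 → VUtil, (∀ k, u k ∈ V) →
      ¬ ∃ π' : Fin 3 → Fin 3 → ℝ, Bistochastic π' ∧
        ((∀ j, u j (π' j) ≥ u j (φ u j)) ∧ ∃ i, u i (π' i) > u i (φ u i)))
    -- strategy-proofness
    (hSP : ∀ (u : Fin 3 → VUtil) (i : Fin 3) (vi' : VUtil), (∀ k, u k ∈ V) → vi' ∈ V →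
      u i (φ u i) ≥ u i (φ (Function.update u i vi') i))
    -- non-bossiness
    (hNB : ∀ (u : Fin 3 → VUtil) (i : Fin 3) (vi' : VUtil), (∀ k, u k ∈ V) → vi' ∈ V →
      φ u i = φ (Function.update u i vi') i → φ u = φ (Function.update u i vi'))
    -- normalized-cone-continuity (over normalized no-ties Bernoulli utilities)
    (hC : ∀ (u : Fin 3 → VUtil) (i : Fin 3) (w : Fin 3 → ℝ) (us : ℕ → Fin 3 → ℝ),
      (∀ k, u k ∈ V) → NoTies w → Normalized w → u i = (fun π => EU w π) →
      (∀ k, NoTies (us k) ∧ Normalized (us k)) →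
      Filter.Tendsto us Filter.atTop (nhds w) →
      Filter.Tendsto (fun k => φ (Function.update u i (fun π => EU (us k) π)))
        Filter.atTop (nhds (φ u)))
    -- the main ordinality theorem on the expected-utility subdomain may be assumed
    (hMain : ∀ u u' : Fin 3 → Fin 3 → ℝ, NoTiesProfile u → NoTiesProfile u' →
      (∀ k, SameOrder (u k) (u' k)) →
      φ (fun k π => EU (u k) π) = φ (fun k π => EU (u' k) π)) :
    ∀ u u' : Fin 3 → VUtil, (∀ k, u k ∈ V) → (∀ k, u' k ∈ V) →
      (∀ k, VSameOrder (u k) (u' k)) → φ u = φ u' := by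
  have hupdV : ∀ (u : Fin 3 → VUtil) (i : Fin 3) (w' : Fin 3 → ℝ),
      (∀ k, u k ∈ V) → NoTies w' → ∀ k, Function.update u i (EWf w') k ∈ V := by
    intro u i w' hu hw' k
    rcases eq_or_ne k i with rfl | hk
    · rw [Function.update_self]; exact hV1 w' hw'
    · rw [Function.update_of_ne hk]; exact hu k
  have hiff : ∀ (vv : VUtil) (τ : Fin 3 → ℝ), VSameOrder vv (EWf τ) →
      ∀ a b : Fin 3, (vv (degen a) > vv (degen b) ↔ τ a > τ b) := by
    intro vv τ h a b
    have := h a b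
    rwa [EWf_degen, EWf_degen] at this
  have key : ∀ n : ℕ, ∀ S : Finset (Fin 3), S.card ≤ n →
      ∀ u : Fin 3 → VUtil, (∀ k, u k ∈ V) →
      (∀ k, k ∉ S → ∃ w, NoTies w ∧ u k = EWf w) →
      ∀ σ : Fin 3 → Fin 3 → ℝ, (∀ k, NoTies (σ k)) →
      (∀ k, VSameOrder (u k) (EWf (σ k))) →
      φ u = φ (fun k => EWf (σ k)) := by
    intro n
    induction n with
    | zero =>
      intro S hS u hu hEU σ hσ hso
      have hS0 : S = ∅ := Finset.card_eq_zero.mp (Nat.le_zero.mp hS)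
      subst hS0
      choose w hw hwe using fun k => hEU k (Finset.notMem_empty k)
      have hu_eq : u = fun k => EWf (w k) := funext hwe
      rw [hu_eq]
      have hsame' : ∀ k, SameOrder (w k) (σ k) := by
        intro k a b
        have h1 := hiff (u k) (σ k) (hso k) a b
        rw [hwe k, EWf_degen, EWf_degen] at h1
        exact h1
      exact hMain w σ hw hσ hsame'
    | succ n ih =>
      intro S hS u hu hEU σ hσ hso
      by_cases hcase : S.card ≤ n
      · exact ih S hcase u hu hEU σ hσ hso
      · have hpos : 0 < S.card := by omega
        obtain ⟨i, hi⟩ := Finset.card_pos.mp hpos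
        have hcard : (S.erase i).card ≤ n := by
          have := Finset.card_erase_of_mem hi
          omega
        have step : ∀ w' : Fin 3 → ℝ, NoTies w' → VSameOrder (u i) (EWf w') →
            φ (Function.update u i (EWf w')) =
              φ (fun k => EWf (Function.update σ i w' k)) := by
          intro w' hw' hso'
          refine ih (S.erase i) hcard (Function.update u i (EWf w'))
            (hupdV u i w' hu hw') ?_ (Function.update σ i w') ?_ ?_
          · intro k hk
            rcases eq_or_ne k i with rfl | hkne
            · exact ⟨w', hw', by rw [Function.update_self]⟩
            · have hkS : k ∉ S := fun hkS => hk (Finset.mem_erase.mpr ⟨hkne, hkS⟩)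
              obtain ⟨w, hw1, hw2⟩ := hEU k hkS
              exact ⟨w, hw1, by rw [Function.update_of_ne hkne]; exact hw2⟩
          · intro k
            rcases eq_or_ne k i with rfl | hk
            · rw [Function.update_self]; exact hw'
            · rw [Function.update_of_ne hk]; exact hσ k
          · intro k
            rcases eq_or_ne k i with rfl | hk
            · rw [Function.update_self, Function.update_self]
              exact fun a b => Iff.rfl
            · rw [Function.update_of_ne hk, Function.update_of_ne hk]
              exact hso k
        have e2 : φ (Function.update u i (EWf (σ i))) = φ (fun k => EWf (σ k)) := by
          have h := step (σ i) (hσ i) (hso i)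
          rwa [Function.update_eq_self] at h
        have hconst : ∀ w' : Fin 3 → ℝ, NoTies w' → VSameOrder (u i) (EWf w') →
            φ (Function.update u i (EWf w')) = φ (fun k => EWf (σ k)) := by
          intro w' hw' hso'
          rw [step w' hw' hso']
          have hnt1 : NoTiesProfile (Function.update σ i w') := by
            intro k
            rcases eq_or_ne k i with rfl | hk
            · rw [Function.update_self]; exact hw'
            · rw [Function.update_of_ne hk]; exact hσ k
          have hsame1 : ∀ k, SameOrder (Function.update σ i w' k) (σ k) := by
            intro k
            rcases eq_or_ne k i with rfl | hk
            · rw [Function.update_self]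
              intro a b
              exact (hiff (u k) w' hso' a b).symm.trans (hiff (u k) (σ k) (hso k) a b)
            · rw [Function.update_of_ne hk]
              exact fun a b => Iff.rfl
          exact hMain (Function.update σ i w') σ hnt1 hσ hsame1
        have hE'V : EWf (σ i) ∈ V := hV1 (σ i) (hσ i)
        have hvpq : u i (φ u i) ≥ u i (φ (Function.update u i (EWf (σ i))) i) :=
          hSP u i (EWf (σ i)) hu hE'V
        have hb : ∀ w' : Fin 3 → ℝ, NoTies w' → VSameOrder (u i) (EWf w') →
            EU w' (φ (Function.update u i (EWf (σ i))) i) ≥ EU w' (φ u i) := by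
          intro w' hw' hso'
          have h1 := hSP (Function.update u i (EWf w')) i (u i)
            (hupdV u i w' hu hw') (hu i)
          rw [Function.update_idem, Function.update_eq_self, Function.update_self] at h1
          have h3 : φ (Function.update u i (EWf w')) i =
              φ (Function.update u i (EWf (σ i))) i := by
            rw [hconst w' hw' hso', ← hconst (σ i) (hσ i) (hso i)]
          rw [h3] at h1
          exact h1
        have hcum : ∀ x : Fin 3,
            ∑ y ∈ Finset.univ.filter (fun y => u i (degen y) ≥ u i (degen x)), (φ u i) y ≤
            ∑ y ∈ Finset.univ.filter (fun y => u i (degen y) ≥ u i (degen x)),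
              (φ (Function.update u i (EWf (σ i))) i) y := by
          intro x
          have tnt : VNoTies (u i) := hV2 (u i) (hu i)
          have main : ∀ ε : ℝ, 0 < ε →
              0 ≤ ((∑ y, if u i (degen y) ≥ u i (degen x) then
                      (φ (Function.update u i (EWf (σ i))) i) y else 0) -
                    ∑ y, if u i (degen y) ≥ u i (degen x) then (φ u i) y else 0) +
                  ε * ((∑ y, u i (degen y) * (φ (Function.update u i (EWf (σ i))) i) y) -
                        ∑ y, u i (degen y) * (φ u i) y) := by
            intro ε hε
            set w' : Fin 3 → ℝ :=
              fun y => (if u i (degen y) ≥ u i (degen x) then (1:ℝ) else 0)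
                + ε * u i (degen y) with hw'def
            have hmono : ∀ a b : Fin 3, u i (degen a) > u i (degen b) → w' a > w' b := by
              intro a b hab
              have hind : (if u i (degen b) ≥ u i (degen x) then (1:ℝ) else 0) ≤
                  (if u i (degen a) ≥ u i (degen x) then (1:ℝ) else 0) := by
                by_cases hbx : u i (degen b) ≥ u i (degen x)
                · have hax : u i (degen a) ≥ u i (degen x) := le_trans hbx (le_of_lt hab)
                  simp [hbx, hax]
                · simp only [if_neg hbx]
                  split_ifs <;> norm_num
              have hmul : ε * u i (degen b) < ε * u i (degen a) :=
                (mul_lt_mul_iff_right₀ hε).mpr hab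
              simp only [hw'def]
              linarith
            have hw'nt : NoTies w' := by
              intro a b hab
              rcases lt_trichotomy (u i (degen a)) (u i (degen b)) with h | h | h
              · exact ne_of_lt (hmono b a h)
              · exact absurd h (tnt a b hab)
              · exact ne_of_gt (hmono a b h)
            have hw'so : VSameOrder (u i) (EWf w') := by
              intro a b
              rw [EWf_degen, EWf_degen]
              constructor
              · exact hmono a b
              · intro h
                by_contra hno
                rcases eq_or_ne a b with rfl | hab
                · exact lt_irrefl _ h
                · have hba : u i (degen b) > u i (degen a) := by
                    rcases lt_trichotomy (u i (degen a)) (u i (degen b)) with h' | h' | h'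
                    · exact h'
                    · exact absurd h' (tnt a b hab)
                    · exact absurd h' hno
                  exact absurd h (not_lt.mpr (le_of_lt (hmono b a hba)))
            have h0 := hb w' hw'nt hw'so
            have hexp : ∀ r : Fin 3 → ℝ, EU w' r =
                (∑ y, if u i (degen y) ≥ u i (degen x) then r y else 0) +
                  ε * ∑ y, u i (degen y) * r y := by
              intro r
              simp only [hw'def, EU, Fin.sum_univ_three]
              split_ifs <;> ring
            rw [hexp, hexp] at h0
            linarith
          have hs := eps_nonneg main
          simp only [Finset.sum_filter]
          linarith
        have hu'V : ∀ k, Function.update u i (EWf (σ i)) k ∈ V :=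
          hupdV u i (σ i) hu (hσ i)
        have hlp : IsLottery (φ u i) :=
          ⟨fun y => (hB u hu).1 i y, (hB u hu).2.1 i⟩
        have hlq : IsLottery (φ (Function.update u i (EWf (σ i))) i) :=
          ⟨fun y => (hB _ hu'V).1 i y, (hB _ hu'V).2.1 i⟩
        have hpq : φ u i = φ (Function.update u i (EWf (σ i))) i := by
          by_contra hne
          have hdom : VSDom (u i) (φ (Function.update u i (EWf (σ i))) i) (φ u i) :=
            ⟨fun h => hne h.symm, hcum⟩
          have hgt := hV3 (u i) (hu i) _ _ hlq hlp hdom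
          linarith
        have hstep1 : φ u = φ (Function.update u i (EWf (σ i))) :=
          hNB u i (EWf (σ i)) hu hE'V hpq
        rw [hstep1]
        exact e2
  intro u u' hu hu' hsame
  have hntσ : ∀ k, NoTies (fun y => u k (degen y)) := fun k => hV2 (u k) (hu k)
  have hntσ' : ∀ k, NoTies (fun y => u' k (degen y)) := fun k => hV2 (u' k) (hu' k)
  have h1 := key 3 Finset.univ (by simp) u hu
    (fun k hk => absurd (Finset.mem_univ k) hk)
    (fun k y => u k (degen y)) hntσ
    (by
      intro k a b
      rw [EWf_degen, EWf_degen])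
  have h2 := key 3 Finset.univ (by simp) u' hu'
    (fun k hk => absurd (Finset.mem_univ k) hk)
    (fun k y => u' k (degen y)) hntσ'
    (by
      intro k a b
      rw [EWf_degen, EWf_degen])
  rw [h1, h2]
  exact hMain (fun k y => u k (degen y)) (fun k y => u' k (degen y)) hntσ hntσ'
    (fun k => hsame k)
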